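/- Let M = (m_1, ..., m_N) be messages with bin counts N_k, and suppose a single update changes m_i so that either (a) all bin counts are unchanged, or (b) with N_u > N_{u+1} ≥ 1 the counts change to N_u + 1 and N_{u+1} − 1 (all others unchanged). Then the empirical entropy H(M') = −Σ_k (N'_k/N) log(N'_k/N) satisfies H(M') ≤ H(M), with strict inequality in case (b). -/
import Mathlib


open Real Finset

/-- Strict convexity increment lemma for `x ↦ x * log x`. -/
lemma mul_log_increment {A B : ℝ} (hB : 1 ≤ B) (hBA : B < A) :
    B * Real.log B - (B - 1) * Real.log (B - 1) <
      (A + 1) * Real.log (A + 1) - A * Real.log A := by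
  have hconv := Real.strictConvexOn_mul_log
  have hB0 : (0:ℝ) ≤ B - 1 := by linarith
  have hA1 : (0:ℝ) ≤ A + 1 := by linarith
  have h1 := hconv.slope_strict_mono_adjacent (x := B - 1) (y := B) (z := A + 1)
    hB0 hA1 (by linarith) (by linarith)
  have h2 := hconv.secant_strict_mono_aux3 (x := B) (y := A) (z := A + 1)
    (by positivity : (0:ℝ) ≤ B) hA1 hBA (by linarith)
  have hd : (0:ℝ) < A + 1 - B := by linarith
  rw [show B - (B - 1) = (1:ℝ) by ring, div_one] at h1
  rw [show A + 1 - A = (1:ℝ) by ring, div_one] at h2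
  calc B * Real.log B - (B - 1) * Real.log (B - 1)
      < ((A + 1) * Real.log (A + 1) - B * Real.log B) / (A + 1 - B) := h1
    _ < (A + 1) * Real.log (A + 1) - A * Real.log A := h2

lemma div_log_div_eq {N x : ℝ} (hN : 0 < N) (hx : 0 ≤ x) :
    (x / N) * Real.log (x / N) = (x * Real.log x - x * Real.log N) / N := by
  rcases eq_or_lt_of_le hx with rfl | hx
  · simp
  · rw [Real.log_div (ne_of_gt hx) (ne_of_gt hN)]
    field_simp

theorem stmt_8 (K : ℕ) (Nk Nk' : Fin K → ℕ) (N : ℕ) (hN : N = ∑ k, Nk k)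
    (P : Prop)
    (hP : P ↔ ∃ u v : Fin K, u ≠ v ∧ 1 ≤ Nk v ∧ Nk v < Nk u ∧
      Nk' u = Nk u + 1 ∧ Nk' v = Nk v - 1 ∧
      ∀ k, k ≠ u → k ≠ v → Nk' k = Nk k)
    (hcase : (∀ k, Nk' k = Nk k) ∨ P) :
    (-∑ k, ((Nk' k : ℝ) / N) * Real.log ((Nk' k : ℝ) / N) ≤
        -∑ k, ((Nk k : ℝ) / N) * Real.log ((Nk k : ℝ) / N)) ∧
    (P → -∑ k, ((Nk' k : ℝ) / N) * Real.log ((Nk' k : ℝ) / N) <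
        -∑ k, ((Nk k : ℝ) / N) * Real.log ((Nk k : ℝ) / N)) := by
  have key : P → ∑ k, ((Nk k : ℝ) / N) * Real.log ((Nk k : ℝ) / N)
      < ∑ k, ((Nk' k : ℝ) / N) * Real.log ((Nk' k : ℝ) / N) := by
    intro hp
    obtain ⟨u, v, huv, hv1, hvu, hu', hv', hoth⟩ := hP.mp hp
    -- N is positive
    have hNge : Nk u + Nk v ≤ N := by
      rw [hN]
      have : ({u, v} : Finset (Fin K)) ⊆ Finset.univ := Finset.subset_univ _
      calc Nk u + Nk v = ∑ k ∈ ({u, v} : Finset (Fin K)), Nk k :=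
            (Finset.sum_pair huv).symm
        _ ≤ ∑ k, Nk k := Finset.sum_le_sum_of_subset this
    have hNpos : (0:ℝ) < N := by
      have : 1 ≤ N := le_trans (by omega) hNge
      exact_mod_cast Nat.lt_of_lt_of_le Nat.zero_lt_one this
    set g : ℕ → ℝ := fun x => ((x : ℝ) / N) * Real.log ((x : ℝ) / N) with hg
    have hsum : ∑ k, (g (Nk' k) - g (Nk k)) =
        (g (Nk' u) - g (Nk u)) + (g (Nk' v) - g (Nk v)) := by
      have h1 : ∑ k, (g (Nk' k) - g (Nk k)) =
          ∑ k ∈ ({u, v} : Finset (Fin K)), (g (Nk' k) - g (Nk k)) := by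
        refine (Finset.sum_subset (Finset.subset_univ _) ?_).symm
        intro k _ hk
        simp only [Finset.mem_insert, Finset.mem_singleton, not_or] at hk
        rw [hoth k hk.1 hk.2, sub_self]
      rw [h1, Finset.sum_pair huv]
    have hdiff : 0 < ∑ k, (g (Nk' k) - g (Nk k)) := by
      rw [hsum, hu', hv']
      set A : ℝ := (Nk u : ℝ) with hA
      set B : ℝ := (Nk v : ℝ) with hB
      have hB1 : (1:ℝ) ≤ B := by rw [hB]; exact_mod_cast hv1
      have hBA : B < A := by rw [hA, hB]; exact_mod_cast hvu
      have hcast1 : ((Nk u + 1 : ℕ) : ℝ) = A + 1 := by push_cast; ring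
      have hcast2 : ((Nk v - 1 : ℕ) : ℝ) = B - 1 := by
        push_cast [hv1]; ring
      have e1 : g (Nk u + 1) = ((A+1) * Real.log (A+1) - (A+1) * Real.log N) / N := by
        rw [hg]; simp only [hcast1]; exact div_log_div_eq hNpos (by linarith)
      have e2 : g (Nk v - 1) = ((B-1) * Real.log (B-1) - (B-1) * Real.log N) / N := by
        rw [hg]; simp only [hcast2]; exact div_log_div_eq hNpos (by linarith)
      have e3 : g (Nk u) = (A * Real.log A - A * Real.log N) / N :=
        div_log_div_eq hNpos (by positivity)
      have e4 : g (Nk v) = (B * Real.log B - B * Real.log N) / N :=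
        div_log_div_eq hNpos (by positivity)
      rw [e1, e2, e3, e4]
      have hmain := mul_log_increment hB1 hBA
      have hcomb : ((A+1) * Real.log (A+1) - (A+1) * Real.log N) / N
            - (A * Real.log A - A * Real.log N) / N
          + (((B-1) * Real.log (B-1) - (B-1) * Real.log N) / N
            - (B * Real.log B - B * Real.log N) / N)
          = ((A+1) * Real.log (A+1) - A * Real.log A
            - (B * Real.log B - (B-1) * Real.log (B-1))) / N := by ring
      rw [hcomb]
      apply div_pos _ hNpos
      linarith
    have := Finset.sum_sub_distrib (f := fun k => g (Nk' k)) (g := fun k => g (Nk k))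
      (s := Finset.univ) ▸ hdiff
    rw [Finset.sum_sub_distrib] at hdiff
    linarith
  constructor
  · rcases hcase with h | hp
    · simp only [h, le_refl]
    · have := key hp; linarith
  · intro hp
    have := key hp; linarith
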